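/- Let -2 < m < -1 and γ < 0. If f solves f''' + (m+2) f f'' - (2m+1)(f')^2 = 0 on [0,∞) with f(0) = -γ, f''(0) = -1, f'(∞) = 0, then f'(0) ≥ -1/((m+2)γ). -/

import Mathlib

/-!
The quantity `g = f'' + (m+2) f f'` satisfies `g' = 3(m+1) f'^2 ≤ 0` along the equation, so
`g ≤ g(0) = -c` with `c = (m+2) γ f'(0) + 1`. If the claim failed, `c` would be positive, and
integrating `f'' + (m+2) f f' ≤ -c` once more gives
`f'(t) + (m+2)/2 f(t)^2 ≤ f'(0) + (m+2)/2 γ^2 - c t`, so `f'(t) → -∞`,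
contradicting `f'(∞) = 0`.
-/

open Filter Set

lemma antitoneOn_Ici_of_hasDerivAt_nonpos {g g' : ℝ → ℝ} {a : ℝ}
    (hg : ∀ t, HasDerivAt g (g' t) t) (hg' : ∀ t > a, g' t ≤ 0) : AntitoneOn g (Ici a) := by
  refine antitoneOn_of_hasDerivWithinAt_nonpos (convex_Ici a)
    (fun t _ => (hg t).continuousAt.continuousWithinAt) (fun t _ => (hg t).hasDerivWithinAt) ?_
  rw [interior_Ici]
  exact hg'

lemma tendsto_atBot_of_le_sub_mul {u : ℝ → ℝ} {A c : ℝ} (hc : 0 < c)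
    (h : ∀ t ≥ 0, u t ≤ A - c * t) : Tendsto u atTop atBot := by
  have hlin : Tendsto (fun t : ℝ => A - c * t) atTop atBot := by
    simpa only [sub_eq_add_neg, neg_mul, id_eq] using
      tendsto_atBot_add_const_left _ A (tendsto_id.const_mul_atTop_of_neg (neg_neg_of_pos hc))
  exact tendsto_atBot_mono' _ ((eventually_ge_atTop 0).mono h) hlin

lemma hasDerivAt_iteratedDeriv {f : ℝ → ℝ} {n : ℕ} (k : ℕ) (hf : ContDiff ℝ n f)
    (hk : k < n) (t : ℝ) : HasDerivAt (iteratedDeriv k f) (iteratedDeriv (k + 1) f t) t := by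
  rw [iteratedDeriv_succ]
  exact (hf.differentiable_iteratedDeriv k (by exact_mod_cast hk) t).hasDerivAt

lemma hasDerivAt_deriv_add_mul_mul_deriv {f : ℝ → ℝ} (hf : ContDiff ℝ 3 f) (k t : ℝ) :
    HasDerivAt (fun t => iteratedDeriv 2 f t + k * f t * deriv f t)
      (iteratedDeriv 3 f t + k * deriv f t * deriv f t + k * f t * iteratedDeriv 2 f t) t := by
  have hf' : HasDerivAt f (deriv f t) t := hf.differentiable (by norm_num) t |>.hasDerivAt
  have hf'' : HasDerivAt (deriv f) (iteratedDeriv 2 f t) t := by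
    simpa only [iteratedDeriv_one] using hasDerivAt_iteratedDeriv 1 hf (by norm_num) t
  have hf''' : HasDerivAt (iteratedDeriv 2 f) (iteratedDeriv 3 f t) t :=
    hasDerivAt_iteratedDeriv 2 hf (by norm_num) t
  exact (hf'''.add ((hf'.const_mul k).mul hf'')).congr_deriv (add_assoc ..).symm

lemma antitoneOn_deriv_add_mul_mul_deriv {f : ℝ → ℝ} {m : ℝ} (hf : ContDiff ℝ 3 f)
    (hm : m < -1)
    (hode : ∀ t ≥ (0:ℝ), iteratedDeriv 3 f t + (m + 2) * f t * iteratedDeriv 2 f t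
      - (2 * m + 1) * (deriv f t) ^ 2 = 0) :
    AntitoneOn (fun t => iteratedDeriv 2 f t + (m + 2) * f t * deriv f t) (Ici 0) := by
  refine antitoneOn_Ici_of_hasDerivAt_nonpos (hasDerivAt_deriv_add_mul_mul_deriv hf (m + 2))
    fun t ht => ?_
  nlinarith [hode t ht.le, sq_nonneg (deriv f t)]

lemma deriv_add_mul_le {f : ℝ → ℝ} (hf : ContDiff ℝ 2 f) {k c : ℝ} (hk : 0 ≤ k)
    (hg : ∀ t ≥ 0, iteratedDeriv 2 f t + k * f t * deriv f t ≤ -c) {t : ℝ} (ht : 0 ≤ t) :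
    deriv f t + c * t ≤ deriv f 0 + k / 2 * f 0 ^ 2 := by
  have hΦ (s : ℝ) : HasDerivAt (fun s => deriv f s + k / 2 * f s ^ 2 + c * s)
      (iteratedDeriv 2 f s + k * f s * deriv f s + c) s := by
    have hf' : HasDerivAt f (deriv f s) s := hf.differentiable (by norm_num) s |>.hasDerivAt
    have hf'' : HasDerivAt (deriv f) (iteratedDeriv 2 f s) s := by
      simpa only [iteratedDeriv_one] using hasDerivAt_iteratedDeriv 1 hf (by norm_num) s
    exact ((hf''.add ((hf'.pow 2).const_mul (k / 2))).add
      ((hasDerivAt_id s).const_mul c)).congr_deriv (by push_cast; ring)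
  have hanti := antitoneOn_Ici_of_hasDerivAt_nonpos hΦ fun s hs => by linarith [hg s hs.le]
  have h := hanti self_mem_Ici ht ht
  simp only [mul_zero, add_zero] at h
  nlinarith [sq_nonneg (f t)]

theorem stmt_12 (m γ : ℝ) (hm₁ : -2 < m) (hm₂ : m < -1) (hγ : γ < 0)
    (f : ℝ → ℝ) (hf : ContDiff ℝ 3 f)
    (hode : ∀ t ≥ (0:ℝ), iteratedDeriv 3 f t + (m + 2) * f t * iteratedDeriv 2 f t
      - (2 * m + 1) * (deriv f t) ^ 2 = 0)
    (h0 : f 0 = -γ) (h2 : iteratedDeriv 2 f 0 = -1)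
    (hlim : Filter.Tendsto (deriv f) Filter.atTop (nhds 0)) :
    deriv f 0 ≥ -1 / ((m + 2) * γ) := by
  by_contra! hcon
  have hmγ : (m + 2) * γ < 0 := mul_neg_of_pos_of_neg (by linarith) hγ
  set c := (m + 2) * γ * deriv f 0 + 1
  have hc : 0 < c := by linarith [(lt_div_iff_of_neg hmγ).mp hcon]
  have hg (t : ℝ) (ht : 0 ≤ t) : iteratedDeriv 2 f t + (m + 2) * f t * deriv f t ≤ -c := by
    have h := antitoneOn_deriv_add_mul_mul_deriv hf hm₂ hode self_mem_Ici ht ht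
    simp only [h0, h2] at h
    linarith
  have hbot : Tendsto (deriv f) atTop atBot :=
    tendsto_atBot_of_le_sub_mul (A := deriv f 0 + (m + 2) / 2 * f 0 ^ 2) hc fun t ht => by
      linarith [deriv_add_mul_le (hf.of_le (by norm_num)) (by linarith) hg ht]
  exact not_tendsto_nhds_of_tendsto_atBot hbot 0 hlim
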